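/- Fix p ∈ [1,∞), an integer k ≥ 1, and a measurable function α : [0,1] → (0,1). For measurable representatives f_1, …, f_k of elements of L^p([0,1]) (Lebesgue measure), define g(x) := q_{α(x)}(f_1(x), …, f_k(x)) for x ∈ [0,1]. Then g is measurable and g ∈ L^p([0,1]); moreover for two families f_1,…,f_k and h_1,…,h_k in L^p([0,1]), the corresponding pointwise component-wise quantiles g_f and g_h satisfy ‖g_f − g_h‖_{L^p} ≤ (Σ_{i=1}^k ∫_0^1 |f_i(x) − h_i(x)|^p dx)^{1/p} ≤ Σ_{i=1}^k ‖f_i − h_i‖_{L^p}. -/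

import Mathlib

open MeasureTheory

/-- The `i`-th smallest value (1-based indexing) among `x 0, …, x (k-1)`. -/
noncomputable def sortedVal {k : ℕ} (x : Fin k → ℝ) (i : ℕ) : ℝ :=
  if h : i - 1 < k then x (Tuple.sort x ⟨i - 1, h⟩) else 0

/-- The univariate `α`-quantile `q_α(x) = (x̃_{⌈kα⌉} + x̃_{⌊kα+1⌋})/2. -/
noncomputable def quant {k : ℕ} (α : ℝ) (x : Fin k → ℝ) : ℝ :=
  (sortedVal x ⌈(k : ℝ) * α⌉₊ + sortedVal x ⌊(k : ℝ) * α + 1⌋₊) / 2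

lemma exists_pair {k : ℕ} (x y : Fin k → ℝ) (m : Fin k) :
    ∃ i, x (Tuple.sort x m) ≤ x i ∧ y i ≤ y (Tuple.sort y m) := by
  classical
  set A : Finset (Fin k) := Finset.image (Tuple.sort y) (Finset.Iic m) with hA
  set T : Finset (Fin k) := Finset.image (Tuple.sort x).symm A with hT
  have hTcard : T.card = m.1 + 1 := by
    rw [hT, Finset.card_image_of_injective _ (Equiv.injective _), hA,
      Finset.card_image_of_injective _ (Equiv.injective _), Fin.card_Iic]
  have hex : ∃ j ∈ T, m ≤ j := by
    by_contra h
    push_neg at h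
    have hsub : T ⊆ Finset.Iio m := fun j hj => Finset.mem_Iio.2 (h j hj)
    have := Finset.card_le_card hsub
    rw [hTcard, Fin.card_Iio] at this
    omega
  obtain ⟨j, hjT, hmj⟩ := hex
  refine ⟨Tuple.sort x j, Tuple.monotone_sort x hmj, ?_⟩
  obtain ⟨i', hi'A, hji⟩ := Finset.mem_image.1 hjT
  have hxi : Tuple.sort x j = i' := by rw [← hji]; simp
  rw [hxi]
  obtain ⟨j', hj'm, hjy⟩ := Finset.mem_image.1 hi'A
  rw [← hjy]
  exact Tuple.monotone_sort y (Finset.mem_Iic.1 hj'm)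

lemma osort_abs_sub_le {k : ℕ} (hne : (Finset.univ : Finset (Fin k)).Nonempty)
    (x y : Fin k → ℝ) (m : Fin k) :
    |x (Tuple.sort x m) - y (Tuple.sort y m)|
      ≤ Finset.univ.sup' hne (fun i => |x i - y i|) := by
  set M := Finset.univ.sup' hne (fun i => |x i - y i|) with hM
  have hMi : ∀ i, |x i - y i| ≤ M := fun i =>
    Finset.le_sup' (fun i => |x i - y i|) (Finset.mem_univ i)
  rw [abs_sub_le_iff]
  constructor
  · obtain ⟨i, h1, h2⟩ := exists_pair x y m
    have := hMi i
    have := abs_le.1 this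
    linarith [(abs_le.1 (hMi i)).2, le_abs_self (x i - y i)]
  · obtain ⟨i, h1, h2⟩ := exists_pair y x m
    linarith [le_abs_self (y i - x i), abs_sub_comm (x i) (y i) ▸ hMi i,
      (abs_sub_comm (y i) (x i)) ▸ hMi i, neg_abs_le (x i - y i)]

lemma sortedVal_abs_sub_le {k : ℕ} (hne : (Finset.univ : Finset (Fin k)).Nonempty)
    (x y : Fin k → ℝ) (n : ℕ) :
    |sortedVal x n - sortedVal y n| ≤ Finset.univ.sup' hne (fun i => |x i - y i|) := by
  have hM0 : 0 ≤ Finset.univ.sup' hne (fun i => |x i - y i|) := by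
    obtain ⟨i, hi⟩ := hne
    exact le_trans (abs_nonneg (x i - y i)) (Finset.le_sup' (fun i => |x i - y i|) (Finset.mem_univ i))
  unfold sortedVal
  split_ifs with h
  · exact osort_abs_sub_le hne x y ⟨n - 1, h⟩
  · simpa using hM0

lemma quant_abs_sub_le {k : ℕ} (hne : (Finset.univ : Finset (Fin k)).Nonempty)
    (a : ℝ) (x y : Fin k → ℝ) :
    |quant a x - quant a y| ≤ Finset.univ.sup' hne (fun i => |x i - y i|) := by
  unfold quant
  rw [div_sub_div_same, abs_div]
  have h1 := sortedVal_abs_sub_le hne x y ⌈(k : ℝ) * a⌉₊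
  have h2 := sortedVal_abs_sub_le hne x y ⌊(k : ℝ) * a + 1⌋₊
  have := abs_add_le (sortedVal x ⌈(k : ℝ) * a⌉₊ - sortedVal y ⌈(k : ℝ) * a⌉₊)
    (sortedVal x ⌊(k : ℝ) * a + 1⌋₊ - sortedVal y ⌊(k : ℝ) * a + 1⌋₊)
  have habs : |(2 : ℝ)| = 2 := by norm_num
  rw [habs]
  rw [div_le_iff₀ (by norm_num : (0:ℝ) < 2)]
  calc |sortedVal x ⌈(k : ℝ) * a⌉₊ + sortedVal x ⌊(k : ℝ) * a + 1⌋₊ -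
        (sortedVal y ⌈(k : ℝ) * a⌉₊ + sortedVal y ⌊(k : ℝ) * a + 1⌋₊)|
      = |(sortedVal x ⌈(k : ℝ) * a⌉₊ - sortedVal y ⌈(k : ℝ) * a⌉₊) +
        (sortedVal x ⌊(k : ℝ) * a + 1⌋₊ - sortedVal y ⌊(k : ℝ) * a + 1⌋₊)| := by ring_nf
    _ ≤ _ := this
    _ ≤ _ := by linarith

lemma quant_zero {k : ℕ} (a : ℝ) : quant a (fun _ : Fin k => (0:ℝ)) = 0 := by
  have : ∀ n, sortedVal (fun _ : Fin k => (0:ℝ)) n = 0 := by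
    intro n; unfold sortedVal; split_ifs <;> rfl
  simp [quant, this]

lemma measurable_sortedVal {k : ℕ} (n : ℕ) :
    Measurable (fun x : Fin k → ℝ => sortedVal x n) := by
  unfold sortedVal
  split_ifs with h
  · rcases Nat.eq_zero_or_pos k with rfl | hk
    · omega
    have hne : (Finset.univ : Finset (Fin k)).Nonempty := ⟨⟨0, hk⟩, Finset.mem_univ _⟩
    apply Continuous.measurable
    apply (LipschitzWith.of_dist_le_mul (K := 1) ?_).continuous
    intro x y
    rw [NNReal.coe_one, one_mul, Real.dist_eq]
    refine le_trans (osort_abs_sub_le hne x y ⟨n - 1, h⟩) ?_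
    exact Finset.sup'_le hne _ fun i _ => by
      rw [← Real.dist_eq]; exact dist_le_pi_dist x y i
  · exact measurable_const

lemma real_rpow_add_le {x y q : ℝ} (hx : 0 ≤ x) (hy : 0 ≤ y) (hq0 : 0 ≤ q) (hq1 : q ≤ 1) :
    (x + y) ^ q ≤ x ^ q + y ^ q := by
  have h := NNReal.coe_le_coe.2 (NNReal.rpow_add_le_add_rpow x.toNNReal y.toNNReal hq0 hq1)
  push_cast [NNReal.coe_rpow] at h
  rwa [Real.coe_toNNReal x hx, Real.coe_toNNReal y hy] at h

lemma real_rpow_sum_le {ι : Type*} (s : Finset ι) (a : ι → ℝ) (ha : ∀ i, 0 ≤ a i)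
    {q : ℝ} (hq0 : 0 < q) (hq1 : q ≤ 1) :
    (∑ i ∈ s, a i) ^ q ≤ ∑ i ∈ s, a i ^ q := by
  classical
  induction s using Finset.cons_induction with
  | empty => simp [Real.zero_rpow hq0.ne']
  | cons i s his ih =>
    rw [Finset.sum_cons, Finset.sum_cons]
    calc (a i + ∑ j ∈ s, a j) ^ q ≤ a i ^ q + (∑ j ∈ s, a j) ^ q :=
          real_rpow_add_le (ha i) (Finset.sum_nonneg fun j _ => ha j) hq0.le hq1
      _ ≤ a i ^ q + ∑ j ∈ s, a j ^ q := by linarith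
/-- The point-wise component-wise quantile of measurable `L^p` representatives is a
measurable `L^p` function, and the map is Lipschitz for the `L^p` norm. -/
theorem stmt4 (p : ℝ) (hp : 1 ≤ p) (k : ℕ) (hk : 1 ≤ k)
    (α : ℝ → ℝ) (hαm : Measurable α) (hα : ∀ t, α t ∈ Set.Ioo (0 : ℝ) 1)
    (f g : Fin k → ℝ → ℝ)
    (hfm : ∀ i, Measurable (f i)) (hgm : ∀ i, Measurable (g i))
    (hf : ∀ i, MemLp (f i) (ENNReal.ofReal p) (volume.restrict (Set.Icc (0:ℝ) 1)))
    (hg : ∀ i, MemLp (g i) (ENNReal.ofReal p) (volume.restrict (Set.Icc (0:ℝ) 1))) :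
    Measurable (fun t => quant (α t) (fun i => f i t)) ∧
    MemLp (fun t => quant (α t) (fun i => f i t)) (ENNReal.ofReal p)
      (volume.restrict (Set.Icc (0:ℝ) 1)) ∧
    (∫ t in Set.Icc (0:ℝ) 1,
        |quant (α t) (fun i => f i t) - quant (α t) (fun i => g i t)| ^ p) ^ (1/p)
      ≤ (∑ i, ∫ t in Set.Icc (0:ℝ) 1, |f i t - g i t| ^ p) ^ (1/p) ∧
    (∑ i, ∫ t in Set.Icc (0:ℝ) 1, |f i t - g i t| ^ p) ^ (1/p)
      ≤ ∑ i, (∫ t in Set.Icc (0:ℝ) 1, |f i t - g i t| ^ p) ^ (1/p) := by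
  have hp0 : 0 < p := lt_of_lt_of_le one_pos hp
  have hne : (Finset.univ : Finset (Fin k)).Nonempty := ⟨⟨0, hk⟩, Finset.mem_univ _⟩
  set μ := volume.restrict (Set.Icc (0:ℝ) 1) with hμ
  -- measurability
  have hQm : ∀ (F : Fin k → ℝ → ℝ), (∀ i, Measurable (F i)) →
      Measurable (fun t => quant (α t) (fun i => F i t)) := by
    intro F hF
    have hFm : Measurable (fun t => (fun i => F i t)) := measurable_pi_lambda _ hF
    have key : ∀ (N : ℝ → ℕ), Measurable N →
        Measurable (fun t => sortedVal (fun i => F i t) (N t)) := by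
      intro N hN
      have hprod : Measurable (fun q : (Fin k → ℝ) × ℕ => sortedVal q.1 q.2) :=
        measurable_from_prod_countable_left fun n => measurable_sortedVal n
      exact hprod.comp (hFm.prodMk hN)
    have h1 : Measurable (fun t => ⌈(k:ℝ) * α t⌉₊) := (hαm.const_mul _).nat_ceil
    have h2 : Measurable (fun t => ⌊(k:ℝ) * α t + 1⌋₊) :=
      ((hαm.const_mul _).add_const 1).nat_floor
    unfold quant
    exact ((key _ h1).add (key _ h2)).div_const 2
  have hQmf := hQm f hfm
  have hQmg := hQm g hgm
  refine ⟨hQmf, ?_, ?_, ?_⟩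
  · -- MemLp
    have hGmem : MemLp (fun t => ∑ i, |f i t|) (ENNReal.ofReal p) μ := by
      apply memLp_finset_sum
      intro i _
      simpa [Real.norm_eq_abs] using (hf i).norm
    refine MemLp.of_le hGmem hQmf.aestronglyMeasurable ?_
    refine Filter.Eventually.of_forall fun t => ?_
    have h1 : |quant (α t) (fun i => f i t) - quant (α t) (fun _ => (0:ℝ))|
        ≤ Finset.univ.sup' hne (fun i => |f i t - 0|) :=
      quant_abs_sub_le hne (α t) _ _
    rw [quant_zero, sub_zero] at h1
    have h2 : Finset.univ.sup' hne (fun i => |f i t - 0|) ≤ ∑ i, |f i t| := by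
      refine Finset.sup'_le hne _ fun i _ => ?_
      rw [sub_zero]
      exact Finset.single_le_sum (fun j _ => abs_nonneg (f j t)) (Finset.mem_univ i)
    have h3 : ‖(fun t => ∑ i, |f i t|) t‖ = ∑ i, |f i t| := by
      simp only [Real.norm_eq_abs]
      exact abs_of_nonneg (Finset.sum_nonneg fun j _ => abs_nonneg _)
    rw [Real.norm_eq_abs, h3]
    exact h1.trans h2
  · -- Lp inequality
    have hInt : ∀ i, Integrable (fun t => |f i t - g i t| ^ p) μ := by
      intro i
      have := ((hf i).sub (hg i)).integrable_norm_rpow (by simpa using hp0) (by simp)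
      simpa [Real.norm_eq_abs, ENNReal.toReal_ofReal hp0.le] using this
    have hptwise : ∀ t, |quant (α t) (fun i => f i t) - quant (α t) (fun i => g i t)| ^ p
        ≤ ∑ i, |f i t - g i t| ^ p := by
      intro t
      have h1 : |quant (α t) (fun i => f i t) - quant (α t) (fun i => g i t)|
          ≤ Finset.univ.sup' hne (fun i => |f i t - g i t|) :=
        quant_abs_sub_le hne (α t) _ _
      obtain ⟨i0, _, hi0⟩ := Finset.exists_mem_eq_sup' hne (fun i => |f i t - g i t|)
      calc |quant (α t) (fun i => f i t) - quant (α t) (fun i => g i t)| ^ p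
          ≤ (Finset.univ.sup' hne (fun i => |f i t - g i t|)) ^ p :=
            Real.rpow_le_rpow (abs_nonneg _) h1 hp0.le
        _ = |f i0 t - g i0 t| ^ p := by rw [hi0]
        _ ≤ ∑ i, |f i t - g i t| ^ p :=
            Finset.single_le_sum (f := fun j => |f j t - g j t| ^ p)
              (fun j _ => Real.rpow_nonneg (abs_nonneg _) p) (Finset.mem_univ i0)
    have hmono : (∫ t, |quant (α t) (fun i => f i t) - quant (α t) (fun i => g i t)| ^ p ∂μ)
        ≤ ∑ i, ∫ t, |f i t - g i t| ^ p ∂μ := by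
      rw [← integral_finset_sum _ (fun i _ => hInt i)]
      refine integral_mono_of_nonneg ?_ (integrable_finset_sum _ (fun i _ => hInt i)) ?_
      · exact Filter.Eventually.of_forall fun t => Real.rpow_nonneg (abs_nonneg _) p
      · exact Filter.Eventually.of_forall hptwise
    exact Real.rpow_le_rpow
      (integral_nonneg fun t => Real.rpow_nonneg (abs_nonneg _) p) hmono
      (by positivity)
  · -- sum rpow
    refine real_rpow_sum_le _ _ (fun i => integral_nonneg fun t => Real.rpow_nonneg (abs_nonneg _) p) (by positivity) ?_
    rw [div_le_one hp0]
    linarith
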